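/- Let N be a free abelian group of rank d ≥ 2 and let N'' ⊆ N be a subgroup that contains a subgroup S which is a direct summand of N of rank d − 2. Then the quotient group Λ²N/(N ∧ N'') is cyclic. -/

import Mathlib

/-!
Write `N = S ⊕ T`; then `T` has rank 2, say with basis `x, y`. Splitting both factors of
`n ∧ m` along `S ⊕ T`, every term with a factor in `S ⊆ N''` lies in `N ∧ N''` (after
swapping factors), and what is left is `t ∧ t'` with `t, t' ∈ T`, a multiple of `x ∧ y`
(the determinant). Hence the class of `x ∧ y` generates `Λ²N / (N ∧ N'')`.
-/

open ExteriorAlgebra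

namespace ExteriorAlgebra

variable {R M : Type*} [CommRing R] [AddCommGroup M] [Module R M]

theorem ι_mul_ι_swap (x y : M) : ι R x * ι R y = -(ι R y * ι R x) :=
  eq_neg_of_add_eq_zero_right (ι_add_mul_swap y x)

theorem ι_smul_add_smul_mul_ι_smul_add_smul (a b c e : R) (x y : M) :
    ι R (a • x + b • y) * ι R (c • x + e • y) = (a * e - b * c) • (ι R x * ι R y) := by
  simp only [map_add, map_smul, add_mul, mul_add, smul_mul_assoc, mul_smul_comm,
    ι_sq_zero, smul_zero]
  rw [ι_mul_ι_swap y x, sub_smul]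
  module

theorem ι_mul_ι_mem_span_singleton_of_mem_span_pair {x y t t' : M}
    (ht : t ∈ Submodule.span R {x, y}) (ht' : t' ∈ Submodule.span R {x, y}) :
    ι R t * ι R t' ∈ R ∙ (ι R x * ι R y) := by
  obtain ⟨a, b, rfl⟩ := Submodule.mem_span_pair.1 ht
  obtain ⟨c, e, rfl⟩ := Submodule.mem_span_pair.1 ht'
  rw [ι_smul_add_smul_mul_ι_smul_add_smul]
  exact Submodule.smul_mem _ _ (Submodule.mem_span_singleton_self _)

theorem ι_mul_ι_mem_exteriorPower_two (x y : M) : ι R x * ι R y ∈ ⋀[R]^2 M := by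
  rw [exteriorPower, pow_two]
  exact Submodule.mul_mem_mul (LinearMap.mem_range_self _ x) (LinearMap.mem_range_self _ y)

theorem exteriorPower_two_le_of_codisjoint {S T : Submodule R M} (h : Codisjoint S T)
    {P : Submodule R (ExteriorAlgebra R M)} (hS : ∀ n, ∀ s ∈ S, ι R n * ι R s ∈ P)
    (hT : ∀ t ∈ T, ∀ t' ∈ T, ι R t * ι R t' ∈ P) : ⋀[R]^2 M ≤ P := by
  rw [exteriorPower, pow_two, Submodule.mul_le]
  rintro _ ⟨n, rfl⟩ _ ⟨m, rfl⟩
  obtain ⟨s, hs, t, ht, rfl⟩ := Submodule.mem_sup.1 (h.eq_top ▸ Submodule.mem_top : n ∈ S ⊔ T)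
  obtain ⟨s', hs', t', ht', rfl⟩ := Submodule.mem_sup.1 (h.eq_top ▸ Submodule.mem_top : m ∈ S ⊔ T)
  have hsplit : ι R (s + t) * ι R (s' + t') =
      ι R (s + t) * ι R s' - ι R t' * ι R s + ι R t * ι R t' := by
    rw [ι_mul_ι_swap t' s]
    simp only [map_add, add_mul, mul_add]
    abel
  rw [hsplit]
  exact add_mem (sub_mem (hS _ _ hs') (hS _ _ hs)) (hT _ ht _ ht')

end ExteriorAlgebra

theorem Submodule.span_singleton_mkQ_eq_top_of_le_span_singleton_sup {R E : Type*} [Ring R]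
    [AddCommGroup E] [Module R E] {A P : Submodule R E} {ω : E} (hω : ω ∈ A)
    (hA : A ≤ (R ∙ ω) ⊔ P) : R ∙ (P.comap A.subtype).mkQ ⟨ω, hω⟩ = ⊤ := by
  refine eq_top_iff.2 fun q _ => ?_
  obtain ⟨x, rfl⟩ := Submodule.mkQ_surjective _ q
  obtain ⟨_, hk, p, hp, hx⟩ := Submodule.mem_sup.1 (hA x.2)
  obtain ⟨r, rfl⟩ := Submodule.mem_span_singleton.1 hk
  refine Submodule.mem_span_singleton.2 ⟨r, ?_⟩
  rw [← map_smul, Submodule.mkQ_apply, Submodule.mkQ_apply, Submodule.Quotient.eq,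
    Submodule.mem_comap]
  simpa [← hx] using neg_mem hp

theorem isAddCyclic_of_span_int_singleton_eq_top {M : Type*} [AddCommGroup M] [Module ℤ M]
    {g : M} (h : ℤ ∙ g = ⊤) : IsAddCyclic M :=
  isAddCyclic_of_surjective (LinearMap.toSpanSingleton ℤ M g)
    (LinearMap.range_eq_top.1 (by rwa [LinearMap.range_toSpanSingleton]))

-- A submodule of a `ℤ`-module carries both `Submodule.module` and `AddCommGroup.toIntModule`.
theorem Module.finrank_int_eq {M : Type*} [AddCommGroup M] (i₁ i₂ : Module ℤ M) :
    @Module.finrank ℤ M _ _ i₁ = @Module.finrank ℤ M _ _ i₂ := by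
  rw [Subsingleton.elim i₁ i₂]

theorem Submodule.finrank_add_finrank_of_isCompl {R M : Type*} [CommRing R] [IsDomain R]
    [IsPrincipalIdealRing R] [AddCommGroup M] [Module R M] [Module.Free R M] [Module.Finite R M]
    {S T : Submodule R M} (h : IsCompl S T) :
    Module.finrank R S + Module.finrank R T = Module.finrank R M := by
  rw [← Module.finrank_prod, (Submodule.prodEquivOfIsCompl S T h).finrank_eq]

theorem Submodule.exists_eq_span_pair_of_finrank_eq_two {R M : Type*} [CommRing R]
    [StrongRankCondition R] [AddCommGroup M] [Module R M] {T : Submodule R M}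
    [Module.Free R T] [Module.Finite R T]
    (hT : Module.finrank R T = 2) : ∃ x y : M, T = Submodule.span R {x, y} := by
  let b := Module.finBasisOfFinrankEq R T hT
  refine ⟨b 0, b 1, ?_⟩
  conv_lhs =>
    rw [← Submodule.map_subtype_top T, ← b.span_eq, Submodule.map_span, ← Set.range_comp]
  congr
  ext
  simp [Fin.exists_fin_two, eq_comm]

theorem stmt7 (d : ℕ) (hd : 2 ≤ d) (N : Type*) [AddCommGroup N] [Module ℤ N]
    [Module.Free ℤ N] [Module.Finite ℤ N] (hrank : Module.finrank ℤ N = d)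
    (N'' : Submodule ℤ N) (S T : Submodule ℤ N)
    (hSN : S ≤ N'') (hST : IsCompl S T) (hSrank : Module.finrank ℤ ↥S = d - 2) :
    -- `Λ²N/(N ∧ N'')` is a cyclic group
    IsAddCyclic (↥(⋀[ℤ]^2 N) ⧸
      ((Submodule.span ℤ {z : ExteriorAlgebra ℤ N |
        ∃ n n' : N, n' ∈ N'' ∧ z = ι ℤ n * ι ℤ n'}).comap (⋀[ℤ]^2 N).subtype)) := by
  have hsum : Module.finrank ℤ S + Module.finrank ℤ T = d := by
    rw [Module.finrank_int_eq _ S.module, Module.finrank_int_eq _ T.module, ← hrank]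
    exact Submodule.finrank_add_finrank_of_isCompl hST
  have hT : Module.finrank ℤ T = 2 := by omega
  obtain ⟨x, y, rfl⟩ :=
    Submodule.exists_eq_span_pair_of_finrank_eq_two ((Module.finrank_int_eq _ _).trans hT)
  set G := Submodule.span ℤ {z : ExteriorAlgebra ℤ N | ∃ n n' : N, n' ∈ N'' ∧ z = ι ℤ n * ι ℤ n'}
  have hle : ⋀[ℤ]^2 N ≤ (ℤ ∙ (ι ℤ x * ι ℤ y)) ⊔ G :=
    exteriorPower_two_le_of_codisjoint hST.codisjoint
      (fun n s hs => Submodule.mem_sup_right (Submodule.subset_span ⟨n, s, hSN hs, rfl⟩))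
      (fun t ht t' ht' =>
        Submodule.mem_sup_left (ι_mul_ι_mem_span_singleton_of_mem_span_pair ht ht'))
  exact isAddCyclic_of_span_int_singleton_eq_top
    (Submodule.span_singleton_mkQ_eq_top_of_le_span_singleton_sup
      (ι_mul_ι_mem_exteriorPower_two x y) hle)
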